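/- If the instance (A, k) of Distinct Vectors constructed from φ has a solution K, then φ is satisfiable. Moreover, the truth assignment α defined by letting α agree, on the variables of each bundle B_i, with the assignment corresponding to the unique column of K among B_i's columns, satisfies every clause of φ. -/

import Mathlib

/-!
The construction of the paper.  Rows and columns are 0-indexed here:
* `r ≥ 2` is a power of two, the number of variables of the CNF formula `φ`;
  variables are elements of `Fin r`; a literal is a variable plus a polarity.
* `s = 2 ^ ℓ - 1` (with `ℓ ≥ 1`) is the number of clauses; clause `q : Fin s`
  is the finite set `Clause q` of literals.
* `L = log₂ r` is the number of bundles; bundle `i` is a list `B i` of exactly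
  `r' = ⌈r / log₂ r⌉` variables (with repetitions allowed), and every variable
  occurs in exactly one bundle.
* For every bundle `i` there is a list of `ρ = 2 ^ r'` truth assignments
  `asg i p : Fin r → Bool` (`p : Fin ρ`, only the values on `B i`'s variables are
  relevant) containing every assignment of `B i`'s variables at least once.
* The matrix `A` has `n = ℓ + ρ * L` columns: the `ℓ` consistency columns
  `0, …, ℓ - 1`, followed, for each bundle `i`, by `B i`'s columns
  `ℓ + i * ρ, …, ℓ + (i + 1) * ρ - 1` (the `p`-th corresponding to assignment `p`).
* The matrix `A` has `m = 1 + L + 2 * s` rows: the all-zero row `0`, the bundle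
  indicator rows `1, …, L` (row `i + 1` is `1` exactly on bundle `i`'s columns),
  and, for each clause `q : Fin s`, the odd row `1 + L + 2 * q` (the `ℓ`-bit binary
  encoding of `q + 1` on the consistency columns and `sat_i(p, q)` on the `p`-th of
  bundle `i`'s columns) and the even row `1 + L + 2 * q + 1` (the encoding of `q + 1`
  on the consistency columns and `0` elsewhere).
* `k = ℓ + L`.  A solution is a set `K` of at most `k` columns such that the rows
  of `A` restricted to the columns in `K` are pairwise distinct.
-/

/-- A literal over variables `Fin r`: a variable together with a polarity. -/
structure DVLit (r : ℕ) where
  var : Fin r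
  pos : Bool
deriving DecidableEq

/-- All the data of the construction: the CNF formula `φ` (variables, clauses),
the bundles, and the lists of truth assignments of each bundle. -/
structure DVInstance where
  /-- number of variables -/
  r : ℕ
  hr : 2 ≤ r
  hrpow : ∃ t : ℕ, r = 2 ^ t
  ℓ : ℕ
  hℓ : 1 ≤ ℓ
  /-- number of clauses -/
  s : ℕ
  hs : s = 2 ^ ℓ - 1
  /-- the clauses of `φ` -/
  Clause : Fin s → Finset (DVLit r)
  /-- the bundles: lists of variables of length `r' = ⌈r / log₂ r⌉` -/
  B : Fin (Nat.log 2 r) → List (Fin r)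
  hBlen : ∀ i, (B i).length = (r + Nat.log 2 r - 1) / Nat.log 2 r
  /-- every variable occurs in exactly one bundle -/
  hBpart : ∀ v : Fin r, ∃! i, v ∈ B i
  /-- the list of `ρ = 2 ^ r'` truth assignments of each bundle -/
  asg : Fin (Nat.log 2 r) → Fin (2 ^ ((r + Nat.log 2 r - 1) / Nat.log 2 r)) →
    Fin r → Bool
  /-- every assignment of a bundle's variables occurs at least once in its list -/
  hasg : ∀ i, ∀ β : Fin r → Bool, ∃ p, ∀ v ∈ B i, asg i p v = β v

namespace DVInstance

variable (D : DVInstance)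

/-- `L = log₂ r`, the number of bundles. -/
def L : ℕ := Nat.log 2 D.r

/-- `r' = ⌈r / log₂ r⌉`, the size of each bundle. -/
def r' : ℕ := (D.r + D.L - 1) / D.L

/-- `ρ = 2 ^ r'`, the number of columns of each bundle. -/
def ρ : ℕ := 2 ^ D.r'

/-- the number `n = log₂(s + 1) + ρ * log₂ r` of columns of `A`. -/
def n : ℕ := D.ℓ + D.ρ * D.L

/-- the number `m = 1 + log₂ r + 2 * s` of rows of `A`. -/
def m : ℕ := 1 + D.L + 2 * D.s

/-- the budget `k = log₂(s + 1) + log₂ r`. -/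
def k : ℕ := D.ℓ + D.L

/-- `sat_i(p, q)`: whether the `p`-th assignment of bundle `i` makes clause `q` true,
i.e. whether some literal of clause `q` whose variable belongs to bundle `i` is set
to its polarity by the `p`-th assignment of bundle `i` (nat-indexed version;
`false` outside the index ranges). -/
def satN (i p q : ℕ) : Bool :=
  if h : i < D.L ∧ p < D.ρ ∧ q < D.s then
    decide (∃ lit ∈ D.Clause ⟨q, h.2.2⟩, lit.var ∈ D.B ⟨i, h.1⟩ ∧
      D.asg ⟨i, h.1⟩ ⟨p, h.2.1⟩ lit.var = lit.pos)
  else false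

/-- The constructed binary matrix `A` (rows and columns 0-indexed;
entries outside the `m × n` range are irrelevant). -/
def A (row col : ℕ) : Bool :=
  if row = 0 then
    -- the all-zero row
    false
  else if row ≤ D.L then
    -- bundle indicator rows: row `i + 1` is `1` exactly on bundle `i`'s columns
    decide (D.ℓ + (row - 1) * D.ρ ≤ col ∧ col < D.ℓ + row * D.ρ)
  else if col < D.ℓ then
    -- clause rows on the consistency columns: the binary encoding of the
    -- (1-indexed) clause number
    Nat.testBit ((row - D.L - 1) / 2 + 1) col
  else if (row - D.L - 1) % 2 = 0 then
    -- odd row of clause `q = (row - L - 1) / 2`: `sat_i(p, q)` on the `p`-th of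
    -- bundle `i`'s columns
    D.satN ((col - D.ℓ) / D.ρ) ((col - D.ℓ) % D.ρ) ((row - D.L - 1) / 2)
  else
    -- even row of clause `q`: zero outside the consistency columns
    false

/-- `K` is a solution for the instance `(A, k)`: a set of at most `k` columns of `A`
such that the rows of `A` restricted to the columns in `K` are pairwise distinct. -/
def Solution (K : Finset ℕ) : Prop :=
  (∀ c ∈ K, c < D.n) ∧ K.card ≤ D.k ∧
    ∀ i j, i < D.m → j < D.m → i ≠ j → ∃ c ∈ K, D.A i c ≠ D.A j c

end DVInstance

/-!
The two rows of clause `q` agree on the consistency columns, and elsewhere they differ exactly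
where the odd row records `sat_i(p, q)`. So `K` contains a column `(i, p)` whose assignment
satisfies clause `q` through a variable of bundle `i`, and every `α` agreeing with the
assignments selected by `K` satisfies `φ`.

Such an `α` exists because `K` selects exactly one column per bundle. Separating row `0`
from the even row of clause `2 ^ c - 1` (which encodes `2 ^ c`) forces consistency column `c`
into `K`; separating it from bundle row `i + 1` forces a column of bundle `i` into `K`. These
are already `ℓ + L = k` columns, so there is no room for a second column in any bundle.
-/

theorem Finset.eq_one_of_one_le_of_sum_le_card {ι : Type*} {s : Finset ι} {f : ι → ℕ}
    (hf : ∀ i ∈ s, 1 ≤ f i) (hsum : ∑ i ∈ s, f i ≤ s.card) : ∀ i ∈ s, f i = 1 := by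
  have hcard : ∑ _i ∈ s, 1 = ∑ i ∈ s, f i :=
    le_antisymm (Finset.sum_le_sum hf) (by simpa using hsum)
  exact fun i hi => ((Finset.sum_eq_sum_iff_of_le hf).1 hcard i hi).symm

namespace DVInstance

open Finset

variable (D : DVInstance)

def clauseRow (q : ℕ) : ℕ := 1 + D.L + 2 * q

def bundleCols (i : ℕ) : Finset ℕ := Ico (D.ℓ + i * D.ρ) (D.ℓ + (i + 1) * D.ρ)

lemma clauseRow_succ_lt_m {q : ℕ} (hq : q < D.s) : D.clauseRow q + 1 < D.m := by
  unfold clauseRow m; omega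

lemma disjoint_range_bundleCols (i : ℕ) : Disjoint (range D.ℓ) (D.bundleCols i) := by
  simp only [disjoint_left, mem_range, bundleCols, mem_Ico]
  omega

lemma pairwise_disjoint_bundleCols : Pairwise (Function.onFun Disjoint D.bundleCols) := by
  have hlt {i j : ℕ} (hij : i < j) : Disjoint (D.bundleCols i) (D.bundleCols j) := by
    have : (i + 1) * D.ρ ≤ j * D.ρ := Nat.mul_le_mul_right _ hij
    simp only [disjoint_left, bundleCols, mem_Ico]
    omega
  intro i j hij
  rcases Nat.lt_or_gt_of_ne hij with h | h
  exacts [hlt h, (hlt h).symm]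

lemma A_zero (c : ℕ) : D.A 0 c = false := by simp [A]

lemma A_succ {i : ℕ} (hi : i < D.L) (c : ℕ) :
    D.A (i + 1) c = decide (c ∈ D.bundleCols i) := by
  simp [A, bundleCols, Nat.succ_le_of_lt hi]

lemma clauseRow_ne_zero (q : ℕ) : D.clauseRow q ≠ 0 := by unfold clauseRow; omega

lemma not_clauseRow_le (q : ℕ) : ¬ D.clauseRow q ≤ D.L := by unfold clauseRow; omega

lemma A_clauseRow_of_lt {c : ℕ} (hc : c < D.ℓ) (q : ℕ) :
    D.A (D.clauseRow q) c = (q + 1).testBit c := by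
  have hq : (D.clauseRow q - D.L - 1) / 2 = q := by unfold clauseRow; omega
  rw [A, if_neg (D.clauseRow_ne_zero q), if_neg (D.not_clauseRow_le q), if_pos hc, hq]

lemma A_clauseRow_succ_of_lt {c : ℕ} (hc : c < D.ℓ) (q : ℕ) :
    D.A (D.clauseRow q + 1) c = (q + 1).testBit c := by
  have hq : (D.clauseRow q + 1 - D.L - 1) / 2 = q := by unfold clauseRow; omega
  rw [A, if_neg (Nat.succ_ne_zero _), if_neg (fun h => D.not_clauseRow_le q (by omega)),
    if_pos hc, hq]

lemma A_clauseRow_of_le {c : ℕ} (hc : D.ℓ ≤ c) (q : ℕ) :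
    D.A (D.clauseRow q) c = D.satN ((c - D.ℓ) / D.ρ) ((c - D.ℓ) % D.ρ) q := by
  have hq : (D.clauseRow q - D.L - 1) / 2 = q := by unfold clauseRow; omega
  have hodd : (D.clauseRow q - D.L - 1) % 2 = 0 := by unfold clauseRow; omega
  rw [A, if_neg (D.clauseRow_ne_zero q), if_neg (D.not_clauseRow_le q), if_neg (by omega),
    if_pos hodd, hq]

lemma A_clauseRow_succ_of_le {c : ℕ} (hc : D.ℓ ≤ c) (q : ℕ) :
    D.A (D.clauseRow q + 1) c = false := by
  have heven : (D.clauseRow q + 1 - D.L - 1) % 2 ≠ 0 := by unfold clauseRow; omega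
  rw [A, if_neg (Nat.succ_ne_zero _), if_neg (fun h => D.not_clauseRow_le q (by omega)),
    if_neg (by omega), if_neg heven]

lemma lt_of_satN_eq_true {i p q : ℕ} (h : D.satN i p q = true) :
    i < D.L ∧ p < D.ρ ∧ q < D.s := by
  unfold satN at h
  split_ifs at h with hlt
  exact hlt

lemma satN_eq_true_iff (i : Fin D.L) (p : Fin D.ρ) (q : Fin D.s) :
    D.satN i p q = true ↔
      ∃ lit ∈ D.Clause q, lit.var ∈ D.B i ∧ D.asg i p lit.var = lit.pos := by
  simp only [satN, i.2, p.2, q.2, and_self, dite_true, decide_eq_true_eq]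
  exact Iff.rfl

def Satisfies (α : Fin D.r → Bool) : Prop :=
  ∀ q : Fin D.s, ∃ lit ∈ D.Clause q, α lit.var = lit.pos

def AgreesWithCols (K : Finset ℕ) (α : Fin D.r → Bool) : Prop :=
  ∀ (i : Fin D.L) (p : Fin D.ρ), D.ℓ + i.val * D.ρ + p.val ∈ K →
    ∀ v ∈ D.B i, α v = D.asg i p v

namespace Solution

variable {D} {K : Finset ℕ}

lemma exists_satN_eq_true (hK : D.Solution K) {q : ℕ} (hq : q < D.s) :
    ∃ c ∈ K, D.ℓ ≤ c ∧ D.satN ((c - D.ℓ) / D.ρ) ((c - D.ℓ) % D.ρ) q = true := by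
  obtain ⟨c, hcK, hne⟩ := hK.2.2 _ _ (Nat.lt_of_succ_lt (D.clauseRow_succ_lt_m hq))
    (D.clauseRow_succ_lt_m hq) (Nat.ne_add_one _)
  rcases Nat.lt_or_ge c D.ℓ with hc | hc
  · rw [D.A_clauseRow_of_lt hc, D.A_clauseRow_succ_of_lt hc] at hne
    exact absurd rfl hne
  · rw [D.A_clauseRow_of_le hc, D.A_clauseRow_succ_of_le hc] at hne
    exact ⟨c, hcK, hc, by simpa using hne⟩

theorem satisfies_of_agreesWithCols (hK : D.Solution K) (α : Fin D.r → Bool)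
    (hα : D.AgreesWithCols K α) : D.Satisfies α := by
  intro q
  obtain ⟨c, hcK, hc, hsat⟩ := hK.exists_satN_eq_true q.2
  obtain ⟨hi, hp, -⟩ := D.lt_of_satN_eq_true hsat
  obtain ⟨lit, hlit, hvar, hpos⟩ := (D.satN_eq_true_iff ⟨_, hi⟩ ⟨_, hp⟩ q).1 hsat
  have hcol : D.ℓ + (c - D.ℓ) / D.ρ * D.ρ + (c - D.ℓ) % D.ρ = c := by
    have := Nat.div_add_mod' (c - D.ℓ) D.ρ
    omega
  have hcolK : D.ℓ + (c - D.ℓ) / D.ρ * D.ρ + (c - D.ℓ) % D.ρ ∈ K := by rwa [hcol]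
  exact ⟨lit, hlit, (hα ⟨_, hi⟩ ⟨_, hp⟩ hcolK _ hvar).trans hpos⟩

lemma range_subset (hK : D.Solution K) : range D.ℓ ⊆ K := by
  intro c hc
  rw [mem_range] at hc
  have hq : 2 ^ c - 1 < D.s := by
    have := Nat.pow_lt_pow_right (by norm_num : 1 < 2) hc
    have := Nat.one_le_two_pow (n := c)
    rw [D.hs]
    omega
  obtain ⟨c', hc'K, hne⟩ := hK.2.2 0 _ (by have := D.clauseRow_succ_lt_m hq; omega)
    (D.clauseRow_succ_lt_m hq) (Nat.succ_ne_zero _).symm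
  rw [D.A_zero] at hne
  rcases Nat.lt_or_ge c' D.ℓ with hc' | hc'
  · rw [D.A_clauseRow_succ_of_lt hc', Nat.sub_add_cancel Nat.one_le_two_pow,
      Nat.testBit_two_pow] at hne
    obtain rfl : c = c' := by simpa using hne
    exact hc'K
  · rw [D.A_clauseRow_succ_of_le hc'] at hne
    exact absurd rfl hne

lemma inter_bundleCols_nonempty (hK : D.Solution K) {i : ℕ} (hi : i < D.L) :
    (K ∩ D.bundleCols i).Nonempty := by
  obtain ⟨c, hcK, hne⟩ := hK.2.2 0 (i + 1) (by unfold m; omega) (by unfold m; omega)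
    (Nat.succ_ne_zero i).symm
  rw [D.A_zero, D.A_succ hi] at hne
  exact ⟨c, mem_inter.2 ⟨hcK, by simpa using hne⟩⟩

lemma add_sum_card_inter_bundleCols_le (hK : D.Solution K) :
    D.ℓ + ∑ i ∈ range D.L, (K ∩ D.bundleCols i).card ≤ K.card :=
  calc D.ℓ + ∑ i ∈ range D.L, (K ∩ D.bundleCols i).card
      = (range D.ℓ ∪ (range D.L).biUnion fun i => K ∩ D.bundleCols i).card := by
        rw [card_union_of_disjoint, card_range, card_biUnion]
        · exact (D.pairwise_disjoint_bundleCols.mono fun i j h =>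
            h.mono inter_subset_right inter_subset_right).set_pairwise _
        · exact (disjoint_biUnion_right _ _ _).2 fun i _ =>
            (D.disjoint_range_bundleCols i).mono_right inter_subset_right
    _ ≤ K.card := card_le_card <| union_subset hK.range_subset <|
        biUnion_subset.2 fun _ _ => inter_subset_left

lemma card_inter_bundleCols (hK : D.Solution K) {i : ℕ} (hi : i < D.L) :
    (K ∩ D.bundleCols i).card = 1 := by
  refine eq_one_of_one_le_of_sum_le_card
    (fun j hj => (hK.inter_bundleCols_nonempty (mem_range.1 hj)).card_pos) ?_ i
    (mem_range.2 hi)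
  have := hK.add_sum_card_inter_bundleCols_le
  have := hK.2.1
  rw [card_range]
  unfold k at this
  omega

lemma existsUnique_col_mem (hK : D.Solution K) (i : Fin D.L) :
    ∃! p : Fin D.ρ, D.ℓ + i.val * D.ρ + p.val ∈ K := by
  obtain ⟨c, hc⟩ := card_eq_one.1 (hK.card_inter_bundleCols i.2)
  have hcmem : c ∈ D.bundleCols i := (mem_inter.1 (hc ▸ mem_singleton_self c)).2
  simp only [bundleCols, mem_Ico, add_mul, one_mul] at hcmem
  have hmem_iff (p : Fin D.ρ) :
      D.ℓ + i.val * D.ρ + p.val ∈ K ↔ D.ℓ + i.val * D.ρ + p.val = c := by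
    have hp : D.ℓ + i.val * D.ρ + p.val ∈ D.bundleCols i := by
      simp only [bundleCols, mem_Ico, add_mul, one_mul]
      omega
    rw [← and_iff_left (a := _ ∈ K) hp, ← mem_inter, hc, mem_singleton]
  refine ⟨⟨c - (D.ℓ + i * D.ρ), by omega⟩, (hmem_iff _).2 (by dsimp only; omega),
    fun p hp => ?_⟩
  have := (hmem_iff p).1 hp
  exact Fin.ext (by dsimp only; omega)

lemma exists_agreesWithCols (hK : D.Solution K) : ∃ α, D.AgreesWithCols K α := by
  choose pK _ hpK using hK.existsUnique_col_mem
  choose bundle hbundle using fun v => (D.hBpart v).exists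
  refine ⟨fun v => D.asg (bundle v) (pK (bundle v)) v, fun i p hp v hv => ?_⟩
  obtain rfl := (D.hBpart v).unique (hbundle v) hv
  rw [hpK _ p hp]

end Solution

end DVInstance

/-- If the constructed instance `(A, k)` has a solution `K`, then `φ`
is satisfiable; moreover, every truth assignment `α` that agrees, on the variables of
each bundle `B i`, with the assignment corresponding to a column of `K` among `B i`'s
columns, satisfies every clause of `φ`. -/
theorem solution_implies_satisfiable (D : DVInstance) (K : Finset ℕ)
    (hK : D.Solution K) :
    (∃ α : Fin D.r → Bool, ∀ q : Fin D.s, ∃ lit ∈ D.Clause q, α lit.var = lit.pos) ∧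
    (∀ α : Fin D.r → Bool,
      (∀ (i : Fin D.L) (p : Fin D.ρ), D.ℓ + i.val * D.ρ + p.val ∈ K →
        ∀ v ∈ D.B i, α v = D.asg i p v) →
      ∀ q : Fin D.s, ∃ lit ∈ D.Clause q, α lit.var = lit.pos) :=
  ⟨hK.exists_agreesWithCols.imp hK.satisfies_of_agreesWithCols, hK.satisfies_of_agreesWithCols⟩
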